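/- arXiv:2112.08737 — 4 statements merged into one kernel-verified Lean document; each statement's English description precedes it below -/
import Mathlib

section
/- The operator $\mathcal{L}(u,p) = (\frac{EI}{\rho}u'''', \frac{\varkappa}{m}p - \frac{EI}{m}(u'''(l_0^-)-u'''(l_0^+)))$ on the domain of pairs $(u,p)$ with $u \in H^2[0,l]\cap H^4(0,l_0)\cap H^4(l_0,l)$, $u(0)=u(l)=u''(0)=u''(l)=0$, $u''$ continuous at $l_0$, and $p=u(l_0)$, is symmetric with respect to the inner product $\langle (u_i,p_i),(u_j,p_j)\rangle = \int_0^l \rho u_i u_j\,dx + m p_i p_j$, i.e., $\langle \mathcal{L}\zeta_i, \zeta_j\rangle = \langle \zeta_i, \mathcal{L}\zeta_j\rangle$ for all $\zeta_i,\zeta_j$ in the domain. -/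
open Set MeasureTheory intervalIntegral Filter Topology

lemma parts (a b : ℝ) (hab : a ≤ b)
    (f f1 f2 f3 f4 g g1 g2 g3 g4 : ℝ → ℝ)
    (hf1 : ∀ x ∈ Set.Ioo a b, HasDerivAt f (f1 x) x)
    (hf2 : ∀ x ∈ Set.Ioo a b, HasDerivAt f1 (f2 x) x)
    (hf3 : ∀ x ∈ Set.Ioo a b, HasDerivAt f2 (f3 x) x)
    (hf4 : ∀ x ∈ Set.Ioo a b, HasDerivAt f3 (f4 x) x)
    (hg1 : ∀ x ∈ Set.Ioo a b, HasDerivAt g (g1 x) x)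
    (hg2 : ∀ x ∈ Set.Ioo a b, HasDerivAt g1 (g2 x) x)
    (hg3 : ∀ x ∈ Set.Ioo a b, HasDerivAt g2 (g3 x) x)
    (hg4 : ∀ x ∈ Set.Ioo a b, HasDerivAt g3 (g4 x) x)
    (hcf : ContinuousOn f (Set.Icc a b)) (hcf1 : ContinuousOn f1 (Set.Icc a b))
    (hcf2 : ContinuousOn f2 (Set.Icc a b)) (hcf3 : ContinuousOn f3 (Set.Icc a b))
    (hcg : ContinuousOn g (Set.Icc a b)) (hcg1 : ContinuousOn g1 (Set.Icc a b))
    (hcg2 : ContinuousOn g2 (Set.Icc a b)) (hcg3 : ContinuousOn g3 (Set.Icc a b))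
    (hint : IntervalIntegrable (fun x => f4 x * g x - f x * g4 x) volume a b) :
    ∫ x in a..b, (f4 x * g x - f x * g4 x)
      = (f3 b * g b - f2 b * g1 b + f1 b * g2 b - f b * g3 b)
      - (f3 a * g a - f2 a * g1 a + f1 a * g2 a - f a * g3 a) := by
  apply intervalIntegral.integral_eq_sub_of_hasDeriv_right_of_le hab
    (f := fun x => f3 x * g x - f2 x * g1 x + f1 x * g2 x - f x * g3 x)
  · exact (((hcf3.mul hcg).sub (hcf2.mul hcg1)).add (hcf1.mul hcg2)).sub (hcf.mul hcg3)
  · intro x hx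
    have h : HasDerivAt (fun x => f3 x * g x - f2 x * g1 x + f1 x * g2 x - f x * g3 x)
        (f4 x * g x - f x * g4 x) x := by
      have := ((((hf4 x hx).mul (hg1 x hx)).sub ((hf3 x hx).mul (hg2 x hx))).add
        ((hf2 x hx).mul (hg3 x hx))).sub ((hf1 x hx).mul (hg4 x hx))
      exact this.congr_deriv (by ring)
    exact h.hasDerivWithinAt
  · exact hint

lemma contExtendLeft (a l0 : ℝ) (u3 : ℝ → ℝ) (u3m : ℝ)
    (hc : ContinuousOn u3 (Set.Ico a l0))
    (hlim : Filter.Tendsto u3 (nhdsWithin l0 (Set.Iio l0)) (nhds u3m)) :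
    ContinuousOn (fun x => if x = l0 then u3m else u3 x) (Set.Icc a l0) := by
  intro x hx
  by_cases hxl : x = l0
  · subst hxl
    rw [← continuousWithinAt_diff_self, Set.Icc_sdiff_right]
    have h1 : Filter.Tendsto u3 (nhdsWithin x (Set.Ico a x)) (nhds u3m) :=
      hlim.mono_left (nhdsWithin_mono _ Set.Ico_subset_Iio_self)
    have h2 : Filter.Tendsto (fun y => if y = x then u3m else u3 y)
        (nhdsWithin x (Set.Ico a x)) (nhds u3m) := by
      apply h1.congr'
      filter_upwards [self_mem_nhdsWithin] with y hy
      rw [if_neg hy.2.ne]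
    simpa [ContinuousWithinAt] using h2
  · have hxlt : x < l0 := lt_of_le_of_ne hx.2 hxl
    have h0 : ContinuousWithinAt u3 (Set.Ico a l0) x := hc x ⟨hx.1, hxlt⟩
    have hmem : Set.Ico a l0 ∈ nhdsWithin x (Set.Icc a l0) := by
      have : Set.Icc a l0 ∩ Set.Iio l0 ∈ nhdsWithin x (Set.Icc a l0) :=
        Filter.inter_mem self_mem_nhdsWithin
          (mem_nhdsWithin_of_mem_nhds (Iio_mem_nhds hxlt))
      exact Filter.mem_of_superset this (fun y hy => ⟨hy.1.1, hy.2⟩)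
    exact (h0.congr (fun y hy => if_neg hy.2.ne) (if_neg hxl)).mono_of_mem_nhdsWithin hmem

lemma contExtendRight (b l0 : ℝ) (u3 : ℝ → ℝ) (u3p : ℝ)
    (hc : ContinuousOn u3 (Set.Ioc l0 b))
    (hlim : Filter.Tendsto u3 (nhdsWithin l0 (Set.Ioi l0)) (nhds u3p)) :
    ContinuousOn (fun x => if x = l0 then u3p else u3 x) (Set.Icc l0 b) := by
  intro x hx
  by_cases hxl : x = l0
  · subst hxl
    rw [← continuousWithinAt_diff_self, Set.Icc_diff_left]
    have h1 : Filter.Tendsto u3 (nhdsWithin x (Set.Ioc x b)) (nhds u3p) :=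
      hlim.mono_left (nhdsWithin_mono _ Set.Ioc_subset_Ioi_self)
    have h2 : Filter.Tendsto (fun y => if y = x then u3p else u3 y)
        (nhdsWithin x (Set.Ioc x b)) (nhds u3p) := by
      apply h1.congr'
      filter_upwards [self_mem_nhdsWithin] with y hy
      rw [if_neg hy.1.ne']
    simpa [ContinuousWithinAt] using h2
  · have hxgt : l0 < x := lt_of_le_of_ne hx.1 (Ne.symm hxl)
    have h0 : ContinuousWithinAt u3 (Set.Ioc l0 b) x := hc x ⟨hxgt, hx.2⟩
    have hmem : Set.Ioc l0 b ∈ nhdsWithin x (Set.Icc l0 b) := by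
      have : Set.Icc l0 b ∩ Set.Ioi l0 ∈ nhdsWithin x (Set.Icc l0 b) :=
        Filter.inter_mem self_mem_nhdsWithin
          (mem_nhdsWithin_of_mem_nhds (Ioi_mem_nhds hxgt))
      exact Filter.mem_of_superset this (fun y hy => ⟨hy.2, hy.1.2⟩)
    exact (h0.congr (fun y hy => if_neg hy.1.ne') (if_neg hxl)).mono_of_mem_nhdsWithin hmem

lemma derivExtend (S : Set ℝ) (u2 u3 u4 : ℝ → ℝ) (c : ℝ) (l0 : ℝ)
    (hd3 : ∀ x ∈ S, HasDerivWithinAt u2 (u3 x) S x)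
    (hd4 : ∀ x ∈ S, HasDerivWithinAt u3 (u4 x) S x)
    (x : ℝ) (hm : S ∈ nhds x) (hne : x ≠ l0) :
    HasDerivAt u2 ((fun y => if y = l0 then c else u3 y) x) x ∧
      HasDerivAt (fun y => if y = l0 then c else u3 y) (u4 x) x := by
  have hxS : x ∈ S := mem_of_mem_nhds hm
  constructor
  · simpa [if_neg hne] using (hd3 x hxS).hasDerivAt hm
  · apply ((hd4 x hxS).hasDerivAt hm).congr_of_eventuallyEq
    filter_upwards [isOpen_ne.mem_nhds hne] with y hy
    simp [if_neg hy]

theorem stmt2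
    (ρ E I m κ l l0 : ℝ)
    (hρ : 0 < ρ) (hE : 0 < E) (hI : 0 < I) (hm : 0 < m) (hκ : 0 < κ)
    (hl0 : 0 < l0) (hll : l0 < l)
    (pi pj : ℝ)
    (ui ui1 ui2 ui3 ui4 : ℝ → ℝ) (ui3m ui3p : ℝ)
    (uj uj1 uj2 uj3 uj4 : ℝ → ℝ) (uj3m uj3p : ℝ)
    (huid1 : ∀ x ∈ Set.Icc (0:ℝ) l, HasDerivWithinAt ui (ui1 x) (Set.Icc (0:ℝ) l) x)
    (huid2 : ∀ x ∈ Set.Icc (0:ℝ) l, HasDerivWithinAt ui1 (ui2 x) (Set.Icc (0:ℝ) l) x)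
    (huic2 : ContinuousOn ui2 (Set.Icc (0:ℝ) l))
    (huid3 : ∀ x ∈ Set.Icc (0:ℝ) l \ {l0}, HasDerivWithinAt ui2 (ui3 x) (Set.Icc (0:ℝ) l \ {l0}) x)
    (huid4 : ∀ x ∈ Set.Icc (0:ℝ) l \ {l0}, HasDerivWithinAt ui3 (ui4 x) (Set.Icc (0:ℝ) l \ {l0}) x)
    (huibc0 : ui 0 = 0) (huibcl : ui l = 0) (huibc20 : ui2 0 = 0) (huibc2l : ui2 l = 0)
    (hui3m : Filter.Tendsto ui3 (nhdsWithin l0 (Set.Iio l0)) (nhds ui3m))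
    (hui3p : Filter.Tendsto ui3 (nhdsWithin l0 (Set.Ioi l0)) (nhds ui3p))
    (hujd1 : ∀ x ∈ Set.Icc (0:ℝ) l, HasDerivWithinAt uj (uj1 x) (Set.Icc (0:ℝ) l) x)
    (hujd2 : ∀ x ∈ Set.Icc (0:ℝ) l, HasDerivWithinAt uj1 (uj2 x) (Set.Icc (0:ℝ) l) x)
    (hujc2 : ContinuousOn uj2 (Set.Icc (0:ℝ) l))
    (hujd3 : ∀ x ∈ Set.Icc (0:ℝ) l \ {l0}, HasDerivWithinAt uj2 (uj3 x) (Set.Icc (0:ℝ) l \ {l0}) x)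
    (hujd4 : ∀ x ∈ Set.Icc (0:ℝ) l \ {l0}, HasDerivWithinAt uj3 (uj4 x) (Set.Icc (0:ℝ) l \ {l0}) x)
    (hujbc0 : uj 0 = 0) (hujbcl : uj l = 0) (hujbc20 : uj2 0 = 0) (hujbc2l : uj2 l = 0)
    (huj3m : Filter.Tendsto uj3 (nhdsWithin l0 (Set.Iio l0)) (nhds uj3m))
    (huj3p : Filter.Tendsto uj3 (nhdsWithin l0 (Set.Ioi l0)) (nhds uj3p))
    (hpi : pi = ui l0) (hpj : pj = uj l0)
    (hui4int : IntervalIntegrable ui4 MeasureTheory.volume 0 l)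
    (huj4int : IntervalIntegrable uj4 MeasureTheory.volume 0 l) :
    (∫ x in (0:ℝ)..l, ρ * (E * I / ρ * ui4 x) * uj x)
        + m * (κ / m * pi - E * I / m * (ui3m - ui3p)) * pj
      = (∫ x in (0:ℝ)..l, ρ * ui x * (E * I / ρ * uj4 x))
        + m * pi * (κ / m * pj - E * I / m * (uj3m - uj3p)) := by
  have h0l : (0:ℝ) ≤ l := (hl0.trans hll).le
  have hl0l : l0 ≤ l := hll.le
  set S : Set ℝ := Set.Icc (0:ℝ) l \ {l0} with hS
  -- continuity of the low-order functions
  have cui : ContinuousOn ui (Set.Icc 0 l) := fun x hx => (huid1 x hx).continuousWithinAt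
  have cui1 : ContinuousOn ui1 (Set.Icc 0 l) := fun x hx => (huid2 x hx).continuousWithinAt
  have cuj : ContinuousOn uj (Set.Icc 0 l) := fun x hx => (hujd1 x hx).continuousWithinAt
  have cuj1 : ContinuousOn uj1 (Set.Icc 0 l) := fun x hx => (hujd2 x hx).continuousWithinAt
  have cui3S : ContinuousOn ui3 S := fun x hx => (huid4 x hx).continuousWithinAt
  have cuj3S : ContinuousOn uj3 S := fun x hx => (hujd4 x hx).continuousWithinAt
  have hIcoS : Set.Ico (0:ℝ) l0 ⊆ S := fun x hx => ⟨⟨hx.1, hx.2.le.trans hl0l⟩, hx.2.ne⟩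
  have hIocS : Set.Ioc l0 l ⊆ S := fun x hx => ⟨⟨(hl0.trans hx.1).le, hx.2⟩, hx.1.ne'⟩
  -- the modified third derivatives
  set vi3L : ℝ → ℝ := fun x => if x = l0 then ui3m else ui3 x with hvi3L
  set vi3R : ℝ → ℝ := fun x => if x = l0 then ui3p else ui3 x with hvi3R
  set vj3L : ℝ → ℝ := fun x => if x = l0 then uj3m else uj3 x with hvj3L
  set vj3R : ℝ → ℝ := fun x => if x = l0 then uj3p else uj3 x with hvj3R
  have cvi3L : ContinuousOn vi3L (Set.Icc 0 l0) :=
    contExtendLeft 0 l0 ui3 ui3m (cui3S.mono hIcoS) hui3m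
  have cvj3L : ContinuousOn vj3L (Set.Icc 0 l0) :=
    contExtendLeft 0 l0 uj3 uj3m (cuj3S.mono hIcoS) huj3m
  have cvi3R : ContinuousOn vi3R (Set.Icc l0 l) :=
    contExtendRight l l0 ui3 ui3p (cui3S.mono hIocS) hui3p
  have cvj3R : ContinuousOn vj3R (Set.Icc l0 l) :=
    contExtendRight l l0 uj3 uj3p (cuj3S.mono hIocS) huj3p
  -- upgraded derivatives
  have dui : ∀ x ∈ Set.Ioo (0:ℝ) l, HasDerivAt ui (ui1 x) x := fun x hx =>
    (huid1 x (Set.Ioo_subset_Icc_self hx)).hasDerivAt (Icc_mem_nhds hx.1 hx.2)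
  have dui1 : ∀ x ∈ Set.Ioo (0:ℝ) l, HasDerivAt ui1 (ui2 x) x := fun x hx =>
    (huid2 x (Set.Ioo_subset_Icc_self hx)).hasDerivAt (Icc_mem_nhds hx.1 hx.2)
  have duj : ∀ x ∈ Set.Ioo (0:ℝ) l, HasDerivAt uj (uj1 x) x := fun x hx =>
    (hujd1 x (Set.Ioo_subset_Icc_self hx)).hasDerivAt (Icc_mem_nhds hx.1 hx.2)
  have duj1 : ∀ x ∈ Set.Ioo (0:ℝ) l, HasDerivAt uj1 (uj2 x) x := fun x hx =>
    (hujd2 x (Set.Ioo_subset_Icc_self hx)).hasDerivAt (Icc_mem_nhds hx.1 hx.2)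
  have hSnL : ∀ x ∈ Set.Ioo (0:ℝ) l0, S ∈ nhds x := fun x hx =>
    Filter.mem_of_superset (Ioo_mem_nhds hx.1 hx.2)
      (fun y hy => ⟨⟨hy.1.le, hy.2.le.trans hl0l⟩, hy.2.ne⟩)
  have hSnR : ∀ x ∈ Set.Ioo l0 l, S ∈ nhds x := fun x hx =>
    Filter.mem_of_superset (Ioo_mem_nhds hx.1 hx.2)
      (fun y hy => ⟨⟨(hl0.trans hy.1).le, hy.2.le⟩, hy.1.ne'⟩)
  -- integrability
  have hicc : Set.uIcc (0:ℝ) l = Set.Icc 0 l := Set.uIcc_of_le h0l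
  have hint1 : IntervalIntegrable (fun x => ui4 x * uj x) volume 0 l :=
    hui4int.mul_continuousOn (by rw [hicc]; exact cuj)
  have hint2 : IntervalIntegrable (fun x => ui x * uj4 x) volume 0 l :=
    huj4int.continuousOn_mul (by rw [hicc]; exact cui)
  have hintg : IntervalIntegrable (fun x => ui4 x * uj x - ui x * uj4 x) volume 0 l :=
    hint1.sub hint2
  have hintgL : IntervalIntegrable (fun x => ui4 x * uj x - ui x * uj4 x) volume 0 l0 :=
    hintg.mono_set (by rw [Set.uIcc_of_le hl0.le, hicc]; exact Set.Icc_subset_Icc_right hl0l)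
  have hintgR : IntervalIntegrable (fun x => ui4 x * uj x - ui x * uj4 x) volume l0 l :=
    hintg.mono_set (by rw [Set.uIcc_of_le hl0l, hicc]; exact Set.Icc_subset_Icc_left hl0.le)
  -- integration by parts on [0, l0]
  have hL := parts 0 l0 hl0.le ui ui1 ui2 vi3L ui4 uj uj1 uj2 vj3L uj4
    (fun x hx => dui x ⟨hx.1, hx.2.trans hll⟩)
    (fun x hx => dui1 x ⟨hx.1, hx.2.trans hll⟩)
    (fun x hx => (derivExtend S ui2 ui3 ui4 ui3m l0 huid3 huid4 x (hSnL x hx) hx.2.ne).1)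
    (fun x hx => (derivExtend S ui2 ui3 ui4 ui3m l0 huid3 huid4 x (hSnL x hx) hx.2.ne).2)
    (fun x hx => duj x ⟨hx.1, hx.2.trans hll⟩)
    (fun x hx => duj1 x ⟨hx.1, hx.2.trans hll⟩)
    (fun x hx => (derivExtend S uj2 uj3 uj4 uj3m l0 hujd3 hujd4 x (hSnL x hx) hx.2.ne).1)
    (fun x hx => (derivExtend S uj2 uj3 uj4 uj3m l0 hujd3 hujd4 x (hSnL x hx) hx.2.ne).2)
    (cui.mono (Set.Icc_subset_Icc_right hl0l))
    (cui1.mono (Set.Icc_subset_Icc_right hl0l))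
    (huic2.mono (Set.Icc_subset_Icc_right hl0l)) cvi3L
    (cuj.mono (Set.Icc_subset_Icc_right hl0l))
    (cuj1.mono (Set.Icc_subset_Icc_right hl0l))
    (hujc2.mono (Set.Icc_subset_Icc_right hl0l)) cvj3L
    hintgL
  -- integration by parts on [l0, l]
  have hR := parts l0 l hl0l ui ui1 ui2 vi3R ui4 uj uj1 uj2 vj3R uj4
    (fun x hx => dui x ⟨hl0.trans hx.1, hx.2⟩)
    (fun x hx => dui1 x ⟨hl0.trans hx.1, hx.2⟩)
    (fun x hx => (derivExtend S ui2 ui3 ui4 ui3p l0 huid3 huid4 x (hSnR x hx) hx.1.ne').1)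
    (fun x hx => (derivExtend S ui2 ui3 ui4 ui3p l0 huid3 huid4 x (hSnR x hx) hx.1.ne').2)
    (fun x hx => duj x ⟨hl0.trans hx.1, hx.2⟩)
    (fun x hx => duj1 x ⟨hl0.trans hx.1, hx.2⟩)
    (fun x hx => (derivExtend S uj2 uj3 uj4 uj3p l0 hujd3 hujd4 x (hSnR x hx) hx.1.ne').1)
    (fun x hx => (derivExtend S uj2 uj3 uj4 uj3p l0 hujd3 hujd4 x (hSnR x hx) hx.1.ne').2)
    (cui.mono (Set.Icc_subset_Icc_left hl0.le))
    (cui1.mono (Set.Icc_subset_Icc_left hl0.le))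
    (huic2.mono (Set.Icc_subset_Icc_left hl0.le)) cvi3R
    (cuj.mono (Set.Icc_subset_Icc_left hl0.le))
    (cuj1.mono (Set.Icc_subset_Icc_left hl0.le))
    (hujc2.mono (Set.Icc_subset_Icc_left hl0.le)) cvj3R
    hintgR
  have eiL : vi3L l0 = ui3m := by simp [hvi3L]
  have ejL : vj3L l0 = uj3m := by simp [hvj3L]
  have eiR : vi3R l0 = ui3p := by simp [hvi3R]
  have ejR : vj3R l0 = uj3p := by simp [hvj3R]
  -- the key identity
  have key : ∫ x in (0:ℝ)..l, (ui4 x * uj x - ui x * uj4 x)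
      = (ui3m - ui3p) * uj l0 - ui l0 * (uj3m - uj3p) := by
    rw [← intervalIntegral.integral_add_adjacent_intervals hintgL hintgR, hL, hR,
      eiL, ejL, eiR, ejR, huibc0, huibcl, huibc20, huibc2l,
      hujbc0, hujbcl, hujbc20, hujbc2l]
    ring
  -- reduce the goal
  have ha : (∫ x in (0:ℝ)..l, ρ * (E * I / ρ * ui4 x) * uj x)
      = E * I * ∫ x in (0:ℝ)..l, ui4 x * uj x := by
    rw [← intervalIntegral.integral_const_mul]
    apply intervalIntegral.integral_congr
    intro x _
    field_simp
  have hb : (∫ x in (0:ℝ)..l, ρ * ui x * (E * I / ρ * uj4 x))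
      = E * I * ∫ x in (0:ℝ)..l, ui x * uj4 x := by
    rw [← intervalIntegral.integral_const_mul]
    apply intervalIntegral.integral_congr
    intro x _
    field_simp
  have hsub : (∫ x in (0:ℝ)..l, ui4 x * uj x) - (∫ x in (0:ℝ)..l, ui x * uj4 x)
      = (ui3m - ui3p) * uj l0 - ui l0 * (uj3m - uj3p) := by
    rw [← intervalIntegral.integral_sub hint1 hint2]
    exact key
  rw [ha, hb, hpi, hpj]
  have hm' : m ≠ 0 := hm.ne'
  field_simp
  linear_combination (E * I) * hsub
end

section
/- Consider the $2N\times 2N$ block-diagonal matrix $A = \mathrm{diag}(A_1,\dots,A_N)$ with $A_j = \begin{pmatrix} 0 & 1 \\ -\lambda_j & 0\end{pmatrix}$, and the $(r+1)\times 2N$ output matrix $C$ with rows $(c_{s1}, 0, c_{s2}, 0, \dots, c_{sN}, 0)$ for $s=0,\dots,r$. If the $\lambda_1,\dots,\lambda_N$ are pairwise distinct and for each $j\in\{1,\dots,N\}$ there exists $s\in\{0,\dots,r\}$ with $c_{sj}\neq 0$, then the pair $(A,C)$ is observable, i.e., the observability matrix $(C; CA; \dots; CA^{2N-1})$ has rank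 $2N$. -/
/-
Since `A²` acts on each block as multiplication by `-λ_k`, row `2m + i` of the observability
matrix for output `s` sends `x` to `∑ₖ c_{sk} x(k,i) (-λ_k)^m`. For `x` in the kernel, the
equations `m < N` say that the Vandermonde matrix of the distinct nodes `-λ_k` annihilates
`(c_{sk} x(k,i))ₖ`, so `c_{sk} x(k,i) = 0`; choosing `s` with `c_{sk} ≠ 0` gives `x = 0`.
-/

def blockA (N : ℕ) (lam : Fin N → ℝ) : Matrix (Fin N × Fin 2) (Fin N × Fin 2) ℝ :=
  Matrix.of fun p q =>
    if p.1 = q.1 then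
      if p.2 = 0 ∧ q.2 = 1 then 1
      else if p.2 = 1 ∧ q.2 = 0 then -lam p.1
      else 0
    else 0

def outC (N r : ℕ) (c : Fin (r + 1) → Fin N → ℝ) : Matrix (Fin (r + 1)) (Fin N × Fin 2) ℝ :=
  Matrix.of fun s q => if q.2 = 0 then c s q.1 else 0

def obsMat (N r : ℕ) (lam : Fin N → ℝ) (c : Fin (r + 1) → Fin N → ℝ) :
    Matrix (Fin (2 * N) × Fin (r + 1)) (Fin N × Fin 2) ℝ :=
  Matrix.of fun ns q => (outC N r c * (blockA N lam) ^ (ns.1 : ℕ)) ns.2 q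

theorem Matrix.rank_eq_card_width_of_injective_mulVec {m n R : Type*} [Fintype m] [Fintype n]
    [CommRing R] [StrongRankCondition R] {A : Matrix m n R} (hA : Function.Injective A.mulVec) :
    A.rank = Fintype.card n := by
  rw [Matrix.rank, LinearMap.finrank_range_of_inj hA, Module.finrank_fintype_fun_eq_card]

section Observability

variable {N : ℕ} (lam : Fin N → ℝ)

lemma mul_blockA_apply_zero {ι : Type*} (M : Matrix ι (Fin N × Fin 2) ℝ) (s : ι) (k : Fin N) :
    (M * blockA N lam) s (k, 0) = M s (k, 1) * -lam k := by
  rw [Matrix.mul_apply, Fintype.sum_prod_type, Finset.sum_eq_single k]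
  · simp [blockA]
  · intro j _ hj
    simp [blockA, hj]
  · simp

lemma mul_blockA_apply_one {ι : Type*} (M : Matrix ι (Fin N × Fin 2) ℝ) (s : ι) (k : Fin N) :
    (M * blockA N lam) s (k, 1) = M s (k, 0) := by
  rw [Matrix.mul_apply, Fintype.sum_prod_type, Finset.sum_eq_single k]
  · simp [blockA]
  · intro j _ hj
    simp [blockA, hj]
  · simp

lemma outC_mul_blockA_pow_apply {r : ℕ} (c : Fin (r + 1) → Fin N → ℝ) (n : ℕ) (s : Fin (r + 1))
    (k : Fin N) (i : Fin 2) :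
    (outC N r c * blockA N lam ^ n) s (k, i) =
      if n % 2 = i then c s k * (-lam k) ^ (n / 2) else 0 := by
  revert i
  rw [Fin.forall_fin_two]
  induction n with
  | zero => simp [outC]
  | succ n ih =>
    rw [pow_succ, ← Matrix.mul_assoc, mul_blockA_apply_zero, mul_blockA_apply_one, ih.1, ih.2]
    rcases Nat.mod_two_eq_zero_or_one n with h | h
    · have hdiv : (n + 1) / 2 = n / 2 := by omega
      simp [h, Nat.succ_mod_two_eq_one_iff.mpr h, hdiv]
    · have hdiv : (n + 1) / 2 = n / 2 + 1 := by omega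
      simp [h, Nat.succ_mod_two_eq_zero_iff.mpr h, hdiv, pow_succ, mul_assoc]

lemma obsMat_mulVec_apply_two_mul_add {r : ℕ} (c : Fin (r + 1) → Fin N → ℝ)
    (x : Fin N × Fin 2 → ℝ) {m : ℕ} (i : Fin 2) (hm : 2 * m + i < 2 * N) (s : Fin (r + 1)) :
    (obsMat N r lam c).mulVec x (⟨2 * m + i, hm⟩, s) = ∑ k, c s k * x (k, i) * (-lam k) ^ m := by
  have hmod : (2 * m + i) % 2 = i := by omega
  have hdiv : (2 * m + i) / 2 = m := by omega
  simp only [Matrix.mulVec, dotProduct, obsMat, Matrix.of_apply, Fintype.sum_prod_type,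
    Fin.sum_univ_two, outC_mul_blockA_pow_apply, hmod, hdiv]
  refine Finset.sum_congr rfl fun k _ => ?_
  fin_cases i <;> simp [mul_right_comm]

theorem obsMat_mulVec_injective {r : ℕ} {c : Fin (r + 1) → Fin N → ℝ}
    (hlam : Function.Injective lam) (hc : ∀ j, ∃ s, c s j ≠ 0) :
    Function.Injective (obsMat N r lam c).mulVec := by
  refine (injective_iff_map_eq_zero (obsMat N r lam c).mulVecLin).mpr fun x hx => ?_
  funext ⟨k, i⟩
  obtain ⟨s, hs⟩ := hc k
  have hmoments : ∀ m : Fin N, ∑ j, c s j * x (j, i) * (-lam j) ^ (m : ℕ) = 0 := fun m => by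
    rw [← obsMat_mulVec_apply_two_mul_add lam c x i (by omega) s]
    exact congrFun hx _
  have hvanish :=
    Matrix.eq_zero_of_forall_pow_sum_mul_pow_eq_zero (neg_injective.comp hlam) hmoments
  exact (mul_eq_zero.mp (congrFun hvanish k)).resolve_left hs

end Observability

theorem stmt5 (N r : ℕ) (lam : Fin N → ℝ) (c : Fin (r + 1) → Fin N → ℝ)
    (hdist : Function.Injective lam)
    (hc : ∀ j : Fin N, ∃ s : Fin (r + 1), c s j ≠ 0) :
    (obsMat N r lam c).rank = 2 * N := by
  rw [Matrix.rank_eq_card_width_of_injective_mulVec (obsMat_mulVec_injective lam hdist hc)]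
  simp [mul_comm]
end

section
/- Under the same hypotheses (distinct $\lambda_j$ and for each $j$ some $s$ with $c_{sj}\neq 0$), the only vector $e\in\mathbb{R}^{2N}$ satisfying $CA^n e = 0$ for all $n = 0,1,\dots,2N-1$ is $e=0$. -/
section ObservedBlockSystem

open Matrix

variable {N r : ℕ} (lam : Fin N → ℝ) (c : Fin (r + 1) → Fin N → ℝ)

lemma blockA_mulVec_fst (w : Fin N × Fin 2 → ℝ) (j : Fin N) :
    (blockA N lam *ᵥ w) (j, 0) = w (j, 1) := by
  simp [mulVec, dotProduct, Fintype.sum_prod_type, blockA]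

lemma blockA_mulVec_snd (w : Fin N × Fin 2 → ℝ) (j : Fin N) :
    (blockA N lam *ᵥ w) (j, 1) = -lam j * w (j, 0) := by
  simp [mulVec, dotProduct, Fintype.sum_prod_type, blockA]

lemma blockA_sq_mulVec (w : Fin N × Fin 2 → ℝ) (p : Fin N × Fin 2) :
    (blockA N lam *ᵥ (blockA N lam *ᵥ w)) p = -lam p.1 * w p := by
  obtain ⟨j, i⟩ := p
  fin_cases i <;> simp [blockA_mulVec_fst, blockA_mulVec_snd]

lemma blockA_pow_two_mul_mulVec (k : ℕ) (w : Fin N × Fin 2 → ℝ) :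
    blockA N lam ^ (2 * k) *ᵥ w = fun p => (-lam p.1) ^ k * w p := by
  induction k generalizing w with
  | zero => funext p; simp
  | succ k ih =>
    funext p
    rw [mul_add_one, pow_add, ← mulVec_mulVec, ih, sq, ← mulVec_mulVec]
    simp only [blockA_sq_mulVec, pow_succ]
    ring

lemma blockA_pow_two_mul_add_mulVec_fst (k : ℕ) (i : Fin 2) (w : Fin N × Fin 2 → ℝ)
    (j : Fin N) :
    (blockA N lam ^ (2 * k + i) *ᵥ w) (j, 0) = (-lam j) ^ k * w (j, i) := by
  fin_cases i
  · simp [blockA_pow_two_mul_mulVec]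
  · simp [pow_succ, ← mulVec_mulVec, blockA_pow_two_mul_mulVec, blockA_mulVec_fst]

lemma outC_mulVec (u : Fin N × Fin 2 → ℝ)
    (s : Fin (r + 1)) :
    (outC N r c *ᵥ u) s = ∑ j : Fin N, c s j * u (j, 0) := by
  simp [mulVec, dotProduct, Fintype.sum_prod_type, outC]

lemma outC_mul_blockA_pow_mulVec (k : ℕ) (i : Fin 2) (e : Fin N × Fin 2 → ℝ)
    (s : Fin (r + 1)) :
    ((outC N r c * blockA N lam ^ (2 * k + i)) *ᵥ e) s =
      ∑ j : Fin N, c s j * e (j, i) * (-lam j) ^ k := by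
  simp only [← mulVec_mulVec, outC_mulVec, blockA_pow_two_mul_add_mulVec_fst]
  exact Finset.sum_congr rfl fun j _ => by ring

end ObservedBlockSystem

theorem stmt6 (N r : ℕ) (lam : Fin N → ℝ) (c : Fin (r + 1) → Fin N → ℝ)
    (hdist : Function.Injective lam)
    (hc : ∀ j : Fin N, ∃ s : Fin (r + 1), c s j ≠ 0)
    (e : Fin N × Fin 2 → ℝ)
    (he : ∀ n : ℕ, n < 2 * N → (outC N r c * (blockA N lam) ^ n).mulVec e = 0) :
    e = 0 := by
  have hcoeff : ∀ (i : Fin 2) (s : Fin (r + 1)), (fun j => c s j * e (j, i)) = 0 := by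
    intro i s
    refine Matrix.eq_zero_of_forall_pow_sum_mul_pow_eq_zero (f := fun j => -lam j)
      (neg_injective.comp hdist) fun k => ?_
    have h := congrFun (he (2 * k + i) (by omega)) s
    rwa [outC_mul_blockA_pow_mulVec] at h
  funext ⟨j, i⟩
  obtain ⟨s, hs⟩ := hc j
  exact (mul_eq_zero.mp (congrFun (hcoeff i s) j)).resolve_left hs
end

section
/- Let $A = \mathrm{diag}(A_1,\dots,A_N)$ with $A_j = \begin{pmatrix}0&1\\-\lambda_j&0\end{pmatrix}$ and $\lambda_j > 0$. Let $C\in\mathbb{R}^{(r+1)\times 2N}$ have rows $(c_{s1},0,\dots,c_{sN},0)$ and let $F\in\mathbb{R}^{2N\times(r+1)}$ have nonzero entries only in odd rows, with $F_{2j-1,s} = \gamma_s c_{sj}/(\lambda_j \mu_j)$ for positive weights $\mu_j>0$ and $\gamma_s>0$. Then the quadratic form $W(e) = \frac{1}{2}\sum_{j=1}^N \mu_j(\delta_j^2 + \lambda_j \Delta_j^2)$, where $e=(\Delta_1,\delta_1,\dots,\Delta_N,\delta_N)$, satisfies along solutions of $\dot e = (A-FC)e$: $\frac{d}{dt}W(e(t))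 = -\sum_{s=0}^r \gamma_s \big(\sum_{j=1}^N c_{sj}\Delta_j(t)\big)^2 \le 0$. -/
noncomputable def gainF (N r : ℕ) (lam : Fin N → ℝ) (c : Fin (r + 1) → Fin N → ℝ)
    (γ : Fin (r + 1) → ℝ) (μ : Fin N → ℝ) : Matrix (Fin N × Fin 2) (Fin (r + 1)) ℝ :=
  Matrix.of fun q s => if q.2 = 0 then γ s * c s q.1 / (lam q.1 * μ q.1) else 0

noncomputable def quadW (N : ℕ) (lam μ : Fin N → ℝ) (e : Fin N × Fin 2 → ℝ) : ℝ :=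
  (1 / 2) * ∑ j : Fin N, μ j * ((e (j, 1)) ^ 2 + lam j * (e (j, 0)) ^ 2)

lemma mulVec1 (N r : ℕ) (lam μ : Fin N → ℝ) (c : Fin (r + 1) → Fin N → ℝ)
    (γ : Fin (r + 1) → ℝ) (x : Fin N × Fin 2 → ℝ) (j : Fin N) :
    ((blockA N lam - gainF N r lam c γ μ * outC N r c).mulVec x) (j, 1)
      = -lam j * x (j, 0) := by
  simp only [Matrix.mulVec, dotProduct, Fintype.sum_prod_type, Fin.sum_univ_two,
    Matrix.sub_apply, Matrix.mul_apply, blockA, gainF, outC, Matrix.of_apply]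
  simp [Finset.sum_ite_eq, sub_mul]

lemma mulVec0 (N r : ℕ) (lam μ : Fin N → ℝ) (c : Fin (r + 1) → Fin N → ℝ)
    (γ : Fin (r + 1) → ℝ) (x : Fin N × Fin 2 → ℝ) (j : Fin N) :
    ((blockA N lam - gainF N r lam c γ μ * outC N r c).mulVec x) (j, 0)
      = x (j, 1) - ∑ s, γ s * c s j / (lam j * μ j) * ∑ k, c s k * x (k, 0) := by
  simp only [Matrix.mulVec, dotProduct, Fintype.sum_prod_type, Fin.sum_univ_two,
    Matrix.sub_apply, Matrix.mul_apply, blockA, gainF, outC, Matrix.of_apply]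
  simp [Finset.sum_ite_eq, sub_mul, Finset.sum_sub_distrib, Finset.mul_sum, Finset.sum_mul]
  rw [Finset.sum_comm]
  ring_nf
  rw [Finset.sum_add_distrib, Finset.sum_ite_eq]
  simp only [Finset.mem_univ, if_true]
  rw [Finset.sum_neg_distrib, neg_add_eq_sub]
  refine congrArg (fun z => x (j,1) - z) ?_
  refine Finset.sum_congr rfl fun k _ => Finset.sum_congr rfl fun s _ => ?_
  ring

theorem stmt7 (N r : ℕ) (lam μ : Fin N → ℝ) (c : Fin (r + 1) → Fin N → ℝ)
    (γ : Fin (r + 1) → ℝ)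
    (hlam : ∀ j, 0 < lam j) (hμ : ∀ j, 0 < μ j) (hγ : ∀ s, 0 < γ s)
    (e : ℝ → Fin N × Fin 2 → ℝ)
    (he : ∀ t : ℝ, HasDerivAt e
      ((blockA N lam - gainF N r lam c γ μ * outC N r c).mulVec (e t)) t) :
    ∀ t : ℝ,
      HasDerivAt (fun τ => quadW N lam μ (e τ))
        (-∑ s : Fin (r + 1), γ s * (∑ j : Fin N, c s j * e t (j, 0)) ^ 2) t
      ∧ (-∑ s : Fin (r + 1), γ s * (∑ j : Fin N, c s j * e t (j, 0)) ^ 2) ≤ 0 := by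
  intro t
  set M := blockA N lam - gainF N r lam c γ μ * outC N r c with hM
  have hcoord : ∀ p, HasDerivAt (fun τ => e τ p) ((M.mulVec (e t)) p) t :=
    fun p => hasDerivAt_pi.mp (he t) p
  have hW : HasDerivAt (fun τ => quadW N lam μ (e τ))
      ((1/2) * ∑ j, μ j * (2 * e t (j,1) * (M.mulVec (e t)) (j,1)
        + lam j * (2 * e t (j,0) * (M.mulVec (e t)) (j,0)))) t := by
    unfold quadW
    refine HasDerivAt.const_mul _ ?_
    refine HasDerivAt.fun_sum fun j _ => ?_
    refine HasDerivAt.const_mul _ ?_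
    refine HasDerivAt.add ?_ (HasDerivAt.const_mul _ ?_)
    · simpa using (hcoord (j,1)).fun_pow 2
    · simpa using (hcoord (j,0)).fun_pow 2
  have hEq : ((1/2) * ∑ j, μ j * (2 * e t (j,1) * (M.mulVec (e t)) (j,1)
        + lam j * (2 * e t (j,0) * (M.mulVec (e t)) (j,0))))
      = -∑ s : Fin (r + 1), γ s * (∑ j : Fin N, c s j * e t (j, 0)) ^ 2 := by
    simp only [hM, mulVec1, mulVec0]
    have rw1 : ∀ j, (∑ s, γ s * c s j / (lam j * μ j) * ∑ k, c s k * e t (k,0))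
        = (lam j * μ j)⁻¹ * ∑ s, γ s * c s j * ∑ k, c s k * e t (k,0) := fun j => by
      rw [Finset.mul_sum]
      exact Finset.sum_congr rfl fun s _ => by rw [div_eq_mul_inv]; ring
    simp only [rw1]
    have key : ∀ j, μ j * (2 * e t (j,1) * (-lam j * e t (j,0))
        + lam j * (2 * e t (j,0) * (e t (j,1)
          - (lam j * μ j)⁻¹ * ∑ s, γ s * c s j * ∑ k, c s k * e t (k,0))))
        = -(2 * (e t (j,0) * ∑ s, γ s * c s j * ∑ k, c s k * e t (k,0))) := fun j => by
      have h1 : lam j ≠ 0 := (hlam j).ne'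
      have h2 : μ j ≠ 0 := (hμ j).ne'
      field_simp
      ring
    simp only [key]
    have hswap : ∑ j, e t (j,0) * ∑ s, γ s * c s j * ∑ k, c s k * e t (k,0)
        = ∑ s : Fin (r + 1), γ s * (∑ j : Fin N, c s j * e t (j, 0)) ^ 2 := by
      simp only [Finset.mul_sum]
      rw [Finset.sum_comm]
      refine Finset.sum_congr rfl fun s _ => ?_
      rw [pow_two, Finset.sum_mul_sum, Finset.mul_sum]
      refine Finset.sum_congr rfl fun j _ => ?_
      rw [Finset.mul_sum]
      exact Finset.sum_congr rfl fun k _ => by ring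
    rw [Finset.sum_neg_distrib, ← Finset.mul_sum, hswap]
    ring
  refine ⟨hEq ▸ hW, ?_⟩
  exact neg_nonpos.mpr (Finset.sum_nonneg fun s _ => mul_nonneg (hγ s).le (sq_nonneg _))
end
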